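/- If X²_k and X²_{k+1} are independent chi-squared random variables with k and k+1 degrees of freedom, then 4·X²_k·X²_{k+1} has the same distribution as (X²_{2k})², the square of a chi-squared random variable with 2k degrees of freedom. -/

import Mathlib

/-!
Take `X ~ Γ(a, r)`, `Y ~ Γ(a + 1/2, r)`, `W ~ Γ(2a, r)`; all three laws have explicit densities
on `(0, ∞)`. Integrating out `X`, the density of `4XY` at `x²` is a constant multiple of
`∫ y^(-3/2) exp(-r y - q / y) dy` with `q = r x² / 4`. The substitution `y = u⁻²` turns this into
`∫₀^∞ exp(-(A u - B / u)²) du = √π / (2A)`: the inversion `u ↦ B / (A u)` preserves the integrand,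
and `v = A u - B / u` maps `(0, ∞)` onto `ℝ` with `dv = (A + B / u²) du`. The constant that is
left contains `Γ(a) Γ(a + 1/2)`, and Legendre's duplication formula turns the result into
`f_W(x) / (2x)`, the density of `W²` at `x²`.
-/

open MeasureTheory ProbabilityTheory Real Set
open scoped ENNReal

theorem map_withDensity_abs_deriv_mul {s : Set ℝ} {f f' : ℝ → ℝ} (hs : MeasurableSet s)
    (hfm : Measurable f) (hf' : ∀ x ∈ s, HasDerivWithinAt f (f' x) s x) (hf : InjOn f s)
    (g : ℝ → ℝ≥0∞) :
    ((volume.restrict s).withDensity fun x => ENNReal.ofReal |f' x| * g (f x)).map f =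
      (volume.restrict (f '' s)).withDensity g := by
  ext t ht
  rw [Measure.map_apply hfm ht, withDensity_apply _ (hfm ht), withDensity_apply _ ht,
    Measure.restrict_restrict (hfm ht), Measure.restrict_restrict ht, ← image_preimage_inter,
    lintegral_image_eq_lintegral_abs_deriv_mul ((hfm ht).inter hs)
      (fun x hx => (hf' x hx.2).mono inter_subset_right) (hf.mono inter_subset_right)]

theorem map_const_mul_withDensity_Ioi {c : ℝ} (hc : 0 < c) (g : ℝ → ℝ≥0∞) :
    ((volume.restrict (Ioi 0)).withDensity g).map (c * ·) =
      (volume.restrict (Ioi 0)).withDensity fun t => ENNReal.ofReal c⁻¹ * g (t / c) := by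
  have hdensity : g = fun y => ENNReal.ofReal |c| * (ENNReal.ofReal c⁻¹ * g (c * y / c)) := by
    ext y
    rw [← mul_assoc, ← ENNReal.ofReal_mul (abs_nonneg c), abs_of_pos hc, mul_inv_cancel₀ hc.ne',
      mul_div_cancel_left₀ y hc.ne', ENNReal.ofReal_one, one_mul]
  conv_lhs => rw [hdensity]
  rw [map_withDensity_abs_deriv_mul measurableSet_Ioi (measurable_const_mul c)
    (fun y _ => ((hasDerivAt_id y).const_mul c).hasDerivWithinAt.congr_deriv (mul_one c))
    (mul_right_injective₀ hc.ne').injOn (fun t => ENNReal.ofReal c⁻¹ * g (t / c)),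
    image_const_mul_Ioi_zero hc]

theorem map_mul_prod_withDensity_Ioi {μ : Measure ℝ} [SFinite μ] (hμ : ∀ᵐ x ∂μ, 0 < x)
    {g : ℝ → ℝ≥0∞} (hg : Measurable g) :
    (μ.prod ((volume.restrict (Ioi 0)).withDensity g)).map (fun p => p.1 * p.2) =
      (volume.restrict (Ioi 0)).withDensity fun t => ∫⁻ x, ENNReal.ofReal x⁻¹ * g (t / x) ∂μ := by
  ext t ht
  have hmul : Measurable fun p : ℝ × ℝ => p.1 * p.2 := by fun_prop
  have hslice : ∀ᵐ x ∂μ,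
      ((volume.restrict (Ioi 0)).withDensity g) (Prod.mk x ⁻¹' ((fun p => p.1 * p.2) ⁻¹' t)) =
        ∫⁻ u in t, ENNReal.ofReal x⁻¹ * g (u / x) ∂volume.restrict (Ioi 0) := by
    filter_upwards [hμ] with x hx
    change ((volume.restrict (Ioi 0)).withDensity g) ((x * ·) ⁻¹' t) = _
    rw [← Measure.map_apply (measurable_const_mul x) ht, map_const_mul_withDensity_Ioi hx,
      withDensity_apply _ ht]
  rw [Measure.map_apply hmul ht, Measure.prod_apply (hmul ht), withDensity_apply _ ht,
    lintegral_congr_ae hslice, lintegral_lintegral_swap (by fun_prop)]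

theorem image_sq_Ioi_zero : (fun x : ℝ => x ^ 2) '' Ioi 0 = Ioi 0 :=
  (image_subset_iff.2 fun (x : ℝ) (hx : 0 < x) => show 0 < x ^ 2 by positivity).antisymm
    fun (t : ℝ) (ht : 0 < t) => ⟨√t, sqrt_pos.2 ht, sq_sqrt ht.le⟩

@[fun_prop]
theorem measurable_gammaPDF (a r : ℝ) : Measurable (gammaPDF a r) :=
  (measurable_gammaPDFReal a r).ennreal_ofReal

instance sigmaFinite_gammaMeasure (a r : ℝ) : SigmaFinite (gammaMeasure a r) :=
  SigmaFinite.withDensity_of_ne_top' fun _ => ENNReal.ofReal_ne_top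

theorem gammaMeasure_eq_withDensity_Ioi (a r : ℝ) :
    gammaMeasure a r = (volume.restrict (Ioi 0)).withDensity (gammaPDF a r) := by
  have hnull : ∀ᵐ x : ℝ, x ≠ 0 := by simp [ae_iff, measure_singleton]
  rw [← restrict_withDensity measurableSet_Ioi, gammaMeasure, eq_comm]
  refine Measure.restrict_eq_self_of_ae_mem ?_
  rw [ae_withDensity_iff (measurable_gammaPDF a r)]
  filter_upwards [hnull] with x hx hpos
  exact lt_of_le_of_ne (not_lt.1 fun hneg => hpos (gammaPDF_of_neg hneg)) hx.symm

theorem lintegral_exp_neg_sq : ∫⁻ x : ℝ, ENNReal.ofReal (exp (-x ^ 2)) = ENNReal.ofReal √π := by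
  rw [← ofReal_integral_eq_lintegral_ofReal (by simpa using integrable_exp_neg_mul_sq one_pos)
    (ae_of_all _ fun x => (exp_pos _).le)]
  congr 1
  simpa using integral_gaussian 1

theorem image_const_div_Ioi_zero {c : ℝ} (hc : 0 < c) : (c / ·) '' Ioi (0 : ℝ) = Ioi 0 := by
  refine (image_subset_iff.2 fun u hu => div_pos hc hu).antisymm fun y hy => ?_
  exact ⟨c / y, div_pos hc hy, div_div_cancel₀ hc.ne'⟩

theorem lintegral_Ioi_comp_const_div {c : ℝ} (hc : 0 < c) (g : ℝ → ℝ≥0∞) :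
    ∫⁻ u in Ioi 0, ENNReal.ofReal (c / u ^ 2) * g (c / u) = ∫⁻ u in Ioi 0, g u := by
  have hderiv : ∀ u ∈ Ioi (0 : ℝ), HasDerivWithinAt (c / ·) (-(c / u ^ 2)) (Ioi 0) u := by
    intro u hu
    simpa [div_eq_mul_inv] using ((hasDerivAt_inv (ne_of_gt hu)).const_mul c).hasDerivWithinAt
  have hinj : InjOn (c / ·) (Ioi (0 : ℝ)) := fun u _ v _ huv => by
    simpa only [div_div_cancel₀ hc.ne'] using congrArg (c / ·) huv
  conv_rhs => rw [← image_const_div_Ioi_zero hc,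
    lintegral_image_eq_lintegral_abs_deriv_mul measurableSet_Ioi hderiv hinj]
  simp_rw [abs_neg]
  refine setLIntegral_congr_fun measurableSet_Ioi fun u hu => ?_
  rw [abs_of_pos (div_pos hc (pow_pos hu 2))]

theorem image_mul_sub_div_Ioi_zero {A B : ℝ} (hA : 0 < A) (hB : 0 < B) :
    (fun u => A * u - B / u) '' Ioi 0 = univ := by
  refine eq_univ_of_forall fun y => ?_
  -- the positive root of `A u ^ 2 - y u - B = 0`
  set s := √(y ^ 2 + 4 * A * B)
  have hs : s ^ 2 = y ^ 2 + 4 * A * B := sq_sqrt (by positivity)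
  have hys : 0 < y + s := by nlinarith [sqrt_nonneg (y ^ 2 + 4 * A * B)]
  refine ⟨(y + s) / (2 * A), div_pos hys (by positivity), ?_⟩
  field_simp
  linear_combination hs

theorem strictMonoOn_mul_sub_div {A B : ℝ} (hA : 0 < A) (hB : 0 < B) :
    StrictMonoOn (fun u => A * u - B / u) (Ioi 0) := fun x hx y _ hxy => by
  have := div_lt_div_of_pos_left hB hx hxy
  have := mul_lt_mul_of_pos_left hxy hA
  dsimp only
  linarith

theorem lintegral_Ioi_exp_neg_sq_mul_sub_div {A B : ℝ} (hA : 0 < A) (hB : 0 < B) :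
    ∫⁻ u in Ioi 0, ENNReal.ofReal (exp (-(A * u - B / u) ^ 2)) =
      ENNReal.ofReal (√π / (2 * A)) := by
  set e : ℝ → ℝ≥0∞ := fun u => ENNReal.ofReal (exp (-(A * u - B / u) ^ 2))
  have hsymm : ∫⁻ u in Ioi 0, ENNReal.ofReal (B / A / u ^ 2) * e u = ∫⁻ u in Ioi 0, e u := by
    rw [← lintegral_Ioi_comp_const_div (div_pos hB hA) e]
    refine setLIntegral_congr_fun measurableSet_Ioi fun u hu => ?_
    have : A * (B / A / u) - B / (B / A / u) = -(A * u - B / u) := by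
      field_simp
      ring
    simp only [e, this, neg_sq]
  have hderiv : ∀ u ∈ Ioi (0 : ℝ),
      HasDerivWithinAt (fun u => A * u - B / u) (A + B / u ^ 2) (Ioi 0) u := by
    intro u hu
    have := ((hasDerivAt_id' u).const_mul A).sub ((hasDerivAt_inv (ne_of_gt hu)).const_mul B)
    simp only [div_eq_mul_inv]
    exact this.hasDerivWithinAt.congr_deriv (by ring)
  have hgauss : ∫⁻ u in Ioi 0, ENNReal.ofReal (A + B / u ^ 2) * e u = ENNReal.ofReal √π := by
    conv_rhs => rw [← lintegral_exp_neg_sq, ← setLIntegral_univ,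
      ← image_mul_sub_div_Ioi_zero hA hB, lintegral_image_eq_lintegral_abs_deriv_mul
        measurableSet_Ioi hderiv (strictMonoOn_mul_sub_div hA hB).injOn]
    refine setLIntegral_congr_fun measurableSet_Ioi fun u (hu : 0 < u) => ?_
    rw [abs_of_pos (by positivity)]
  have hsplit : ∫⁻ u in Ioi 0, ENNReal.ofReal (A + B / u ^ 2) * e u =
      ENNReal.ofReal (2 * A) * ∫⁻ u in Ioi 0, e u := by
    have hpoint : ∀ u ∈ Ioi (0 : ℝ), ENNReal.ofReal (A + B / u ^ 2) * e u =
        ENNReal.ofReal A * e u + ENNReal.ofReal A * (ENNReal.ofReal (B / A / u ^ 2) * e u) := by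
      intro u (hu : 0 < u)
      have : A + B / u ^ 2 = A + A * (B / A / u ^ 2) := by field_simp
      rw [this, ENNReal.ofReal_add hA.le (by positivity),
        ENNReal.ofReal_mul hA.le, add_mul, mul_assoc]
    rw [setLIntegral_congr_fun measurableSet_Ioi hpoint, lintegral_add_left (by fun_prop),
      lintegral_const_mul _ (by fun_prop), lintegral_const_mul _ (by fun_prop), hsymm, two_mul,
      ENNReal.ofReal_add hA.le hA.le, add_mul]
  rw [ENNReal.ofReal_div_of_pos (by positivity), ENNReal.eq_div_iff (by simpa using hA)
    ENNReal.ofReal_ne_top, ← hsplit, hgauss]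

theorem lintegral_Ioi_comp_inv_sq (g : ℝ → ℝ≥0∞) :
    ∫⁻ u in Ioi 0, ENNReal.ofReal (2 / u ^ 3) * g (u ^ 2)⁻¹ = ∫⁻ y in Ioi 0, g y := by
  have himage : (fun u : ℝ => (u ^ 2)⁻¹) '' Ioi 0 = Ioi 0 := by
    refine (image_subset_iff.2 fun (u : ℝ) (hu : 0 < u) => show 0 < (u ^ 2)⁻¹ by positivity)
      |>.antisymm fun (y : ℝ) (hy : 0 < y) => ⟨(√y)⁻¹, show 0 < (√y)⁻¹ by positivity, ?_⟩
    simp [sq_sqrt hy.le]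
  have hderiv : ∀ u ∈ Ioi (0 : ℝ),
      HasDerivWithinAt (fun u : ℝ => (u ^ 2)⁻¹) (-(2 / u ^ 3)) (Ioi 0) u := by
    intro u (hu : 0 < u)
    have := ((hasDerivAt_pow 2 u).inv (by positivity)).hasDerivWithinAt (s := Ioi 0)
    exact this.congr_deriv (by field_simp; ring)
  have hinj : InjOn (fun u : ℝ => (u ^ 2)⁻¹) (Ioi 0) :=
    fun u (hu : 0 < u) v (hv : 0 < v) huv => by simpa [hu.le, hv.le] using huv
  conv_rhs => rw [← himage,
    lintegral_image_eq_lintegral_abs_deriv_mul measurableSet_Ioi hderiv hinj]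
  refine setLIntegral_congr_fun measurableSet_Ioi fun (u : ℝ) (hu : 0 < u) => ?_
  rw [abs_neg, abs_of_pos (by positivity)]

theorem lintegral_Ioi_rpow_neg_three_halves_mul_exp {p q : ℝ} (hp : 0 < p) (hq : 0 < q) :
    ∫⁻ y in Ioi 0, ENNReal.ofReal (y ^ (-(3 / 2) : ℝ) * exp (-(p * y) - q / y)) =
      ENNReal.ofReal (√(π / q) * exp (-(2 * √(p * q)))) := by
  have hpoint : ∀ u ∈ Ioi (0 : ℝ), ENNReal.ofReal (2 / u ^ 3) *
      ENNReal.ofReal ((u ^ 2)⁻¹ ^ (-(3 / 2) : ℝ) * exp (-(p * (u ^ 2)⁻¹) - q / (u ^ 2)⁻¹)) =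
      ENNReal.ofReal (2 * exp (-(2 * √(p * q)))) *
        ENNReal.ofReal (exp (-(√q * u - √p / u) ^ 2)) := by
    intro u (hu : 0 < u)
    have hrpow : (u ^ 2)⁻¹ ^ (-(3 / 2) : ℝ) = u ^ 3 := by
      rw [← rpow_natCast, ← rpow_neg_one, ← rpow_mul hu.le, ← rpow_mul hu.le]
      norm_num
    -- completing the square
    have hexp : -(p * (u ^ 2)⁻¹) - q / (u ^ 2)⁻¹ = -(√q * u - √p / u) ^ 2 - 2 * √(p * q) := by
      rw [sqrt_mul hp.le]
      field_simp
      linear_combination sq_sqrt hp.le + u ^ 4 * sq_sqrt hq.le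
    rw [hrpow, hexp, sub_eq_add_neg, exp_add, ← ENNReal.ofReal_mul (by positivity),
      ← ENNReal.ofReal_mul (by positivity)]
    congr 1
    field_simp
  rw [← lintegral_Ioi_comp_inv_sq, setLIntegral_congr_fun measurableSet_Ioi hpoint,
    lintegral_const_mul _ (by fun_prop),
    lintegral_Ioi_exp_neg_sq_mul_sub_div (sqrt_pos.2 hq) (sqrt_pos.2 hp),
    ← ENNReal.ofReal_mul (by positivity), sqrt_div' _ hq.le]
  congr 1
  field_simp

theorem gammaPDF_mul_inv_mul_gammaPDF_add_half {a r x y : ℝ} (ha : 0 < a) (hr : 0 < r)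
    (hy : 0 < y) :
    gammaPDF a r y * (ENNReal.ofReal y⁻¹ * gammaPDF (a + 1 / 2) r (x ^ 2 / 4 / y)) =
      ENNReal.ofReal
          (r ^ a / Gamma a * (r ^ (a + 1 / 2) / Gamma (a + 1 / 2)) * (x ^ 2 / 4) ^ (a - 1 / 2)) *
        ENNReal.ofReal (y ^ (-(3 / 2) : ℝ) * exp (-(r * y) - r * x ^ 2 / 4 / y)) := by
  have := Gamma_pos_of_pos ha
  have := Gamma_pos_of_pos (s := a + 1 / 2) (by positivity)
  rw [gammaPDF_of_nonneg hy.le, gammaPDF_of_nonneg (by positivity),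
    ← ENNReal.ofReal_mul (by positivity), ← ENNReal.ofReal_mul (by positivity),
    ← ENNReal.ofReal_mul (by positivity)]
  congr 1
  have hpow : (x ^ 2 / 4 / y) ^ (a + 1 / 2 - 1) = (x ^ 2 / 4) ^ (a - 1 / 2) / y ^ (a - 1 / 2) := by
    rw [show a + 1 / 2 - 1 = a - 1 / 2 by ring, div_rpow (by positivity) hy.le]
  have hy32 : y ^ (-(3 / 2) : ℝ) = y ^ (a - 1) / y ^ (a - 1 / 2) / y := by
    rw [← rpow_sub hy, ← rpow_sub_one hy.ne']
    ring_nf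
  have hexp : exp (-(r * y) - r * x ^ 2 / 4 / y) =
      exp (-(r * y)) * exp (-(r * (x ^ 2 / 4 / y))) := by
    rw [← exp_add]
    ring_nf
  rw [hpow, hy32, hexp]
  ring

theorem lintegral_inv_mul_gammaPDF_add_half {a r x : ℝ} (ha : 0 < a) (hr : 0 < r) (hx : 0 < x) :
    ∫⁻ y, ENNReal.ofReal y⁻¹ * gammaPDF (a + 1 / 2) r (x ^ 2 / 4 / y) ∂gammaMeasure a r =
      ENNReal.ofReal (2 / x) * gammaPDF (2 * a) r x := by
  have := Gamma_pos_of_pos ha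
  have := Gamma_pos_of_pos (s := a + 1 / 2) (by positivity)
  rw [gammaMeasure_eq_withDensity_Ioi, lintegral_withDensity_eq_lintegral_mul _
      (measurable_gammaPDF a r) (by fun_prop)]
  simp only [Pi.mul_apply]
  rw [setLIntegral_congr_fun measurableSet_Ioi
      fun y (hy : 0 < y) => gammaPDF_mul_inv_mul_gammaPDF_add_half ha hr hy,
    lintegral_const_mul _ (by fun_prop),
    lintegral_Ioi_rpow_neg_three_halves_mul_exp hr (by positivity),
    ← ENNReal.ofReal_mul (by positivity), gammaPDF_of_nonneg hx.le,
    ← ENNReal.ofReal_mul (by positivity)]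
  congr 1
  have hsqrt_pq : √(r * (r * x ^ 2 / 4)) = r * x / 2 := by
    rw [show r * (r * x ^ 2 / 4) = (r * x / 2) ^ 2 by ring, sqrt_sq (by positivity)]
  have hsqrt_q : √(π / (r * x ^ 2 / 4)) = 2 * √π / (√r * x) := by
    rw [show r * x ^ 2 / 4 = (√r * x / 2) ^ 2 by rw [div_pow, mul_pow, sq_sqrt hr.le]; ring,
      sqrt_div' _ (sq_nonneg _), sqrt_sq (by positivity)]
    field_simp
  have hr_half : r ^ (a + 1 / 2) = r ^ a * √r := by rw [rpow_add hr, sqrt_eq_rpow]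
  have hr_two : r ^ (2 * a) = r ^ a * r ^ a := by rw [two_mul, rpow_add hr]
  have hx_pow : (x ^ 2 / 4) ^ (a - 1 / 2) = x ^ (2 * a - 1) / 2 ^ (2 * a - 1) := by
    rw [show x ^ 2 / 4 = (x / 2) ^ (2 : ℝ) by norm_num [div_pow], ← rpow_mul (by positivity),
      div_rpow hx.le zero_le_two]
    ring_nf
  have hdup : Gamma a * Gamma (a + 1 / 2) = Gamma (2 * a) * (2 ^ (2 * a - 1))⁻¹ * √π := by
    rw [Gamma_mul_Gamma_add_half, ← rpow_neg zero_le_two, neg_sub]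
  have hexp : exp (-(2 * (r * x / 2))) = exp (-(r * x)) := by ring_nf
  rw [hsqrt_pq, hsqrt_q, hr_half, hr_two, hx_pow, hexp]
  field_simp at hdup ⊢
  linarith

theorem map_four_mul_prod_gammaMeasure {a r : ℝ} (ha : 0 < a) (hr : 0 < r) :
    ((gammaMeasure a r).prod (gammaMeasure (a + 1 / 2) r)).map (fun p => 4 * p.1 * p.2) =
      (gammaMeasure (2 * a) r).map (· ^ 2) := by
  have hpos : ∀ᵐ x ∂gammaMeasure a r, 0 < x := by
    rw [gammaMeasure_eq_withDensity_Ioi]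
    exact (withDensity_absolutelyContinuous _ _).ae_le (ae_restrict_mem measurableSet_Ioi)
  set h : ℝ → ℝ≥0∞ := fun t => ENNReal.ofReal 4⁻¹ *
    ∫⁻ y, ENNReal.ofReal y⁻¹ * gammaPDF (a + 1 / 2) r (t / 4 / y) ∂gammaMeasure a r
  have hprod : ((gammaMeasure a r).prod (gammaMeasure (a + 1 / 2) r)).map
      (fun p => 4 * p.1 * p.2) = (volume.restrict (Ioi 0)).withDensity h := by
    rw [show (fun p : ℝ × ℝ => 4 * p.1 * p.2) = (4 * ·) ∘ (fun p => p.1 * p.2) by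
        ext; simp [mul_assoc],
      ← Measure.map_map (measurable_const_mul 4) (by fun_prop),
      gammaMeasure_eq_withDensity_Ioi (a + 1 / 2),
      map_mul_prod_withDensity_Ioi hpos (measurable_gammaPDF _ _),
      map_const_mul_withDensity_Ioi four_pos]
  have hsq : (volume.restrict (Ioi 0)).withDensity h = ((volume.restrict (Ioi 0)).withDensity
      fun x => ENNReal.ofReal |2 * x| * h (x ^ 2)).map (· ^ 2) := by
    rw [map_withDensity_abs_deriv_mul measurableSet_Ioi (by fun_prop)
      (fun x _ => (hasDerivAt_pow 2 x).hasDerivWithinAt.congr_deriv (by ring))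
      ((pow_left_strictMonoOn₀ two_ne_zero).mono fun x hx => le_of_lt hx).injOn,
      image_sq_Ioi_zero]
  have hdensity : ∀ x ∈ Ioi (0 : ℝ),
      ENNReal.ofReal |2 * x| * h (x ^ 2) = gammaPDF (2 * a) r x := by
    intro x (hx : 0 < x)
    simp only [h]
    rw [lintegral_inv_mul_gammaPDF_add_half ha hr hx, ← mul_assoc, ← mul_assoc,
      ← ENNReal.ofReal_mul (abs_nonneg _), ← ENNReal.ofReal_mul (by positivity),
      abs_of_pos (by positivity), show 2 * x * 4⁻¹ * (2 / x) = 1 by field_simp; norm_num,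
      ENNReal.ofReal_one, one_mul]
  rw [hprod, hsq, gammaMeasure_eq_withDensity_Ioi (2 * a),
    withDensity_congr_ae ((ae_restrict_iff' measurableSet_Ioi).2 (ae_of_all _ hdensity))]

theorem stmt_14_general {Ω : Type*} [MeasurableSpace Ω] (μ : Measure Ω)
    (k : ℕ) (hk : 1 ≤ k)
    (X Y W : Ω → ℝ) (hX : Measurable X) (hY : Measurable Y) (hW : Measurable W)
    (hXd : Measure.map X μ = gammaMeasure ((k : ℝ) / 2) (1 / 2))
    (hYd : Measure.map Y μ = gammaMeasure (((k : ℝ) + 1) / 2) (1 / 2))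
    (hWd : Measure.map W μ = gammaMeasure (k : ℝ) (1 / 2))
    (hind : IndepFun X Y μ) :
    Measure.map (fun ω => 4 * X ω * Y ω) μ = Measure.map (fun ω => W ω ^ 2) μ := by
  have hk2 : (0 : ℝ) < k / 2 := div_pos (Nat.cast_pos.2 hk) two_pos
  have hXσ : SigmaFinite (μ.map X) := hXd ▸ inferInstance
  have hYσ : SigmaFinite (μ.map Y) := hYd ▸ inferInstance
  have hXY : μ.map (fun ω => (X ω, Y ω)) =
      (gammaMeasure ((k : ℝ) / 2) (1 / 2)).prod (gammaMeasure ((k : ℝ) / 2 + 1 / 2) (1 / 2)) := by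
    rw [← add_div, ← hXd, ← hYd]
    exact (indepFun_iff_map_prod_eq_prod_map_map' hX.aemeasurable hY.aemeasurable hXσ hYσ).1 hind
  calc μ.map (fun ω => 4 * X ω * Y ω)
      = (μ.map fun ω => (X ω, Y ω)).map (fun p => 4 * p.1 * p.2) :=
        (Measure.map_map (g := fun p : ℝ × ℝ => 4 * p.1 * p.2) (by fun_prop) (hX.prodMk hY)).symm
    _ = (gammaMeasure (k : ℝ) (1 / 2)).map (· ^ 2) := by
        rw [hXY, map_four_mul_prod_gammaMeasure hk2 one_half_pos, mul_div_cancel₀ _ two_ne_zero]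
    _ = μ.map (fun ω => W ω ^ 2) := by
        rw [← hWd, Measure.map_map (by fun_prop) hW]
        rfl

theorem stmt_14 {Ω : Type*} [MeasurableSpace Ω] (μ : Measure Ω) [IsProbabilityMeasure μ]
    (k : ℕ) (hk : 1 ≤ k)
    (X Y W : Ω → ℝ) (hX : Measurable X) (hY : Measurable Y) (hW : Measurable W)
    (hXd : Measure.map X μ = gammaMeasure ((k : ℝ) / 2) (1 / 2))
    (hYd : Measure.map Y μ = gammaMeasure (((k : ℝ) + 1) / 2) (1 / 2))
    (hWd : Measure.map W μ = gammaMeasure (k : ℝ) (1 / 2))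
    (hind : IndepFun X Y μ) :
    Measure.map (fun ω => 4 * X ω * Y ω) μ = Measure.map (fun ω => W ω ^ 2) μ :=
  stmt_14_general μ k hk X Y W hX hY hW hXd hYd hWd hind
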